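/- Let K be a finite group, H ≤ K a subgroup containing the commutator subgroup [K,K], and n ≥ 2. Define G_n(K,H) ≤ K ≀ S_n as the subgroup generated by S_n, by Hⁿ, and by all (k₁,…,k_n) ∈ Kⁿ with k₁⋯k_n ∈ H. Then G_n(K,H) = {(k₁,…,k_n)·σ : σ ∈ S_n, k₁⋯k_n ∈ H}, and it is a normal subgroup of K ≀ S_n of index [K:H]. -/

import Mathlib

/-- The permutation action of `Equiv.Perm ι` on `ι → K`, by group automorphisms. -/
def permAut (ι K : Type*) [Group K] : Equiv.Perm ι →* MulAut (ι → K) where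
  toFun σ := MulEquiv.arrowCongr σ (MulEquiv.refl K)
  map_one' := rfl
  map_mul' _ _ := rfl

/-- The wreath product `K ≀ Sym(ι) = (ι → K) ⋊ Perm ι`. -/
abbrev WreathProduct (ι K : Type*) [Group K] :=
  SemidirectProduct (ι → K) (Equiv.Perm ι) (permAut ι K)

/-!
Since `[K,K] ≤ H`, the quotient `K ⧸ H` is abelian, so `w ↦ ∏ᵢ (w.left i : K ⧸ H)` is a
homomorphism `K ≀ Sₙ →* K ⧸ H` on which the permutation part acts trivially. Every generator
of `G` lies in its kernel, and every `w` in the kernel is the product `(w.left, 1) * (1, w.right)`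
of two generators. So `G` is this kernel, hence normal, of index `|K ⧸ H|` because the map is
onto as soon as `n ≥ 1`.
-/

open scoped IsMulCommutative

@[simp]
theorem permAut_apply {ι K : Type*} [Group K] (σ : Equiv.Perm ι) (k : ι → K) :
    permAut ι K σ k = k ∘ σ.symm :=
  rfl

theorem MonoidHom.map_list_ofFn_prod {K M : Type*} [Monoid K] [CommMonoid M] (ψ : K →* M)
    {n : ℕ} (k : Fin n → K) : ψ (List.ofFn k).prod = ∏ i, ψ (k i) := by
  rw [map_list_prod, List.map_ofFn, List.prod_ofFn, Function.comp_def]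

namespace WreathProduct

variable {ι K M : Type*} [Fintype ι] [Group K] [CommGroup M]

def prodHom (ψ : K →* M) : WreathProduct ι K →* M :=
  SemidirectProduct.lift (∏ i, ψ.comp (Pi.evalMonoidHom (fun _ => K) i)) 1 fun σ => by
    ext k
    simpa using Equiv.prod_comp σ.symm fun i => ψ (k i)

theorem prodHom_apply (ψ : K →* M) (w : WreathProduct ι K) :
    prodHom ψ w = ∏ i, ψ (w.left i) := by
  simp [prodHom, SemidirectProduct.lift]

theorem prodHom_surjective [Nonempty ι] {ψ : K →* M}
    (hψ : Function.Surjective ψ) : Function.Surjective (prodHom (ι := ι) ψ) := by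
  classical
  intro m
  obtain ⟨k, rfl⟩ := hψ m
  obtain ⟨i⟩ := ‹Nonempty ι›
  refine ⟨SemidirectProduct.inl (Pi.mulSingle i k), ?_⟩
  rw [prodHom_apply, Fintype.prod_eq_single i fun j hj => by simp [hj]]
  simp

theorem index_ker_prodHom [Nonempty ι] {ψ : K →* M} (hψ : Function.Surjective ψ) :
    (prodHom (ι := ι) ψ).ker.index = Nat.card M := by
  rw [Subgroup.index_ker, MonoidHom.range_eq_top_of_surjective _ (prodHom_surjective hψ),
    Subgroup.card_top]

variable {n : ℕ}

theorem mem_ker_prodHom_iff {ψ : K →* M} {w : WreathProduct (Fin n) K} :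
    w ∈ (prodHom ψ).ker ↔ (List.ofFn w.left).prod ∈ ψ.ker := by
  rw [MonoidHom.mem_ker, MonoidHom.mem_ker, prodHom_apply, ψ.map_list_ofFn_prod]

variable (n) in
def Gn (H : Subgroup K) : Subgroup (WreathProduct (Fin n) K) :=
  Subgroup.closure ({w | w.left = 1} ∪ {w | w.right = 1 ∧ ∀ i, w.left i ∈ H} ∪
    {w | w.right = 1 ∧ (List.ofFn w.left).prod ∈ H})

theorem Gn_ker_eq_ker_prodHom (ψ : K →* M) : Gn n ψ.ker = (prodHom ψ).ker := by
  apply le_antisymm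
  · rw [Gn, Subgroup.closure_le]
    rintro w ((hw | ⟨-, hw⟩) | ⟨-, hw⟩) <;> rw [SetLike.mem_coe, mem_ker_prodHom_iff]
    · simp [show w.left = 1 from hw, Pi.one_def, List.ofFn_const]
    · exact Subgroup.list_prod_mem _ (by simpa using hw)
    · exact hw
  · intro w hw
    rw [mem_ker_prodHom_iff] at hw
    rw [← SemidirectProduct.inl_left_mul_inr_right w]
    exact Subgroup.mul_mem _ (Subgroup.subset_closure (Or.inr ⟨rfl, by simpa using hw⟩))
      (Subgroup.subset_closure (Or.inl (Or.inl rfl)))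

end WreathProduct

theorem Gn_description_normal_index_general (K : Type*) [Group K] (H : Subgroup K)
    (hcomm : ⁅(⊤ : Subgroup K), (⊤ : Subgroup K)⁆ ≤ H) (n : ℕ) (hn : 2 ≤ n)
    (G : Subgroup (WreathProduct (Fin n) K))
    (hG : G = Subgroup.closure
      ({w | w.left = 1} ∪ {w | w.right = 1 ∧ ∀ i, w.left i ∈ H} ∪
        {w | w.right = 1 ∧ (List.ofFn w.left).prod ∈ H})) :
    (G : Set (WreathProduct (Fin n) K)) = {w | (List.ofFn w.left).prod ∈ H} ∧
      G.Normal ∧ G.index = H.index := by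
  have : H.Normal := .of_commutator_le K hcomm
  have : IsMulCommutative (K ⧸ H) :=
    Subgroup.Normal.quotient_commutative_iff_commutator_le.mpr hcomm
  have : NeZero n := ⟨by omega⟩
  obtain rfl : G = (WreathProduct.prodHom (QuotientGroup.mk' H)).ker := by
    rw [hG, ← WreathProduct.Gn_ker_eq_ker_prodHom, QuotientGroup.ker_mk']
    rfl
  refine ⟨?_, MonoidHom.normal_ker _, ?_⟩
  · ext w
    simp only [SetLike.mem_coe, WreathProduct.mem_ker_prodHom_iff, QuotientGroup.ker_mk']
    exact Iff.rfl
  · rw [WreathProduct.index_ker_prodHom (QuotientGroup.mk'_surjective H), Subgroup.index_eq_card]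

/-- For `[K,K] ≤ H ≤ K` and `n ≥ 2`, the subgroup `G_n(K,H) ≤ K ≀ S_n`
generated by `S_n`, `Hⁿ` and the tuples with product in `H` is exactly
`{(k₁,…,k_n)·σ : k₁⋯k_n ∈ H}`, and it is normal in `K ≀ S_n` of index `[K:H]`. -/
theorem Gn_description_normal_index (K : Type*) [Group K] [Finite K] (H : Subgroup K)
    (hcomm : ⁅(⊤ : Subgroup K), (⊤ : Subgroup K)⁆ ≤ H) (n : ℕ) (hn : 2 ≤ n)
    (G : Subgroup (WreathProduct (Fin n) K))
    (hG : G = Subgroup.closure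
      ({w | w.left = 1} ∪ {w | w.right = 1 ∧ ∀ i, w.left i ∈ H} ∪
        {w | w.right = 1 ∧ (List.ofFn w.left).prod ∈ H})) :
    (G : Set (WreathProduct (Fin n) K)) = {w | (List.ofFn w.left).prod ∈ H} ∧
      G.Normal ∧ G.index = H.index :=
  Gn_description_normal_index_general K H hcomm n hn G hG
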